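/- Let G be a closed connected colored graph with 4 colors, with N vertices, L edges, F faces (2-bubbles), and B 3-bubbles. Suppose each 3-bubble 𝔅, viewed as a ribbon graph, satisfies the Euler relation n_𝔅 - l_𝔅 + f_𝔅 = 2 - 2g_𝔅 for a nonnegative integer g_𝔅 (its genus). Then N - L + F - B = - Σ_𝔅 g_𝔅, where the sum runs over all 3-bubbles of G. -/

import Mathlib

open scoped Classical
set_option maxHeartbeats 1000000

/-- A closed colored graph with `n+1` colors: a finite multigraph in which every
vertex is incident to exactly one edge of each color in `Fin (n+1)`, and no edge
is a loop. Edges carry an orientation via the ordered pair `ends`. -/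
structure ColoredGraph (n : ℕ) where
  V : Type
  E : Type
  [fV : Fintype V]
  [fE : Fintype E]
  ends : E → V × V
  color : E → Fin (n + 1)
  no_loop : ∀ e, (ends e).1 ≠ (ends e).2
  unique_edge : ∀ (v : V) (i : Fin (n + 1)),
    ∃! e, color e = i ∧ ((ends e).1 = v ∨ (ends e).2 = v)

namespace ColoredGraph

attribute [instance] fV fE

variable {n : ℕ} (G : ColoredGraph n)

/-- Adjacency through an edge whose color lies in `C`. -/
def rel (C : Finset (Fin (n + 1))) (v w : G.V) : Prop :=
  ∃ e, G.color e ∈ C ∧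
    (((G.ends e).1 = v ∧ (G.ends e).2 = w) ∨ ((G.ends e).1 = w ∧ (G.ends e).2 = v))

/-- `S` is the vertex set of a connected component of the subgraph of `G`
consisting of all edges with colors in `C` (a bubble with color set `C`). -/
def IsBubble (C : Finset (Fin (n + 1))) (S : Finset G.V) : Prop :=
  ∃ v, ∀ w, w ∈ S ↔ Relation.ReflTransGen (G.rel C) v w

/-- The bubbles of `G` with exactly `p` colors. -/
def Bubble (p : ℕ) :=
  {x : Finset (Fin (n + 1)) × Finset G.V // x.1.card = p ∧ G.IsBubble x.1 x.2}

noncomputable instance (p : ℕ) : Fintype (G.Bubble p) := by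
  unfold Bubble; exact Fintype.ofFinite _

/-- The sign `(-1)^{q+1}` where `q` is the position (starting from 1) of the
color `i` in the ordered set `C`. -/
def sign (C : Finset (Fin (n + 1))) (i : Fin (n + 1)) : ℤ :=
  (-1) ^ ((C.filter (fun j => j < i)).card)

/-- The bubble `B'` is contained in the bubble `B`. -/
def Contains (B B' : Finset (Fin (n + 1)) × Finset G.V) : Prop :=
  B'.1 ⊆ B.1 ∧ B'.2 ⊆ B.2

/-- The `p`-th boundary operator: it sends a `p`-bubble `B` to the alternating
sum of the `(p-1)`-bubbles contained in it, the `(p-1)`-bubble with color set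
`C \ {i_q}` carrying the sign `(-1)^{q+1}`. -/
noncomputable def boundary (p : ℕ) :
    (G.Bubble p → ℤ) →ₗ[ℤ] (G.Bubble (p - 1) → ℤ) where
  toFun f := fun B' => ∑ B : G.Bubble p, (∑ i ∈ B.1.1,
      if B'.1.1 = B.1.1.erase i ∧ B'.1.2 ⊆ B.1.2 then sign B.1.1 i else 0) * f B
  map_add' f g := by
    funext B'
    simp [mul_add, Finset.sum_add_distrib]
  map_smul' c f := by
    funext B'
    simp [Finset.mul_sum, mul_left_comm]

end ColoredGraph

namespace ColoredGraph

variable {n : ℕ} (G : ColoredGraph n)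

/-- `G` is connected (as a graph). -/
def Conn : Prop := ∀ v w : G.V, Relation.ReflTransGen (G.rel Finset.univ) v w

/-- Two `n`-bubbles are adjacent in the dual graph when they share a common
`(n-1)`-bubble. -/
def DualAdj (B₁ B₂ : G.Bubble n) : Prop :=
  ∃ B' : G.Bubble (n - 1), G.Contains B₁.1 B'.1 ∧ G.Contains B₂.1 B'.1

/-- The dual graph on the `n`-bubbles of `G` is connected. -/
def DualConn : Prop := ∀ B₁ B₂ : G.Bubble n, Relation.ReflTransGen G.DualAdj B₁ B₂

end ColoredGraph

namespace ColoredGraph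

variable (G : ColoredGraph 3)

/-- The edge `e` belongs to the bubble `B`. -/
def EdgeIn (e : G.E) (B : Finset (Fin 4) × Finset G.V) : Prop :=
  G.color e ∈ B.1 ∧ (G.ends e).1 ∈ B.2 ∧ (G.ends e).2 ∈ B.2

/-- The number of vertices of a bubble `B`. -/
def nV (B : G.Bubble 3) : ℕ := B.1.2.card

/-- The number of edges of a bubble `B`. -/
noncomputable def nE (B : G.Bubble 3) : ℕ := Nat.card {e : G.E // G.EdgeIn e B.1}

/-- The number of faces (2-bubbles) of a 3-bubble `B`. -/
noncomputable def nF (B : G.Bubble 3) : ℕ :=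
  Nat.card {F : G.Bubble 2 // G.Contains B.1 F.1}

end ColoredGraph


namespace ColoredGraph

variable {n : ℕ} (G : ColoredGraph n)

lemma rel_symm (C : Finset (Fin (n+1))) : Symmetric (G.rel C) := by
  rintro a b ⟨e, he, h⟩
  exact ⟨e, he, h.symm⟩

lemma rtg_symm (C : Finset (Fin (n+1))) : Symmetric (Relation.ReflTransGen (G.rel C)) :=
  fun a b h => (@Relation.ReflTransGen.stdSymm _ _ ⟨fun x y hxy => G.rel_symm C hxy⟩).symm a b h

lemma rel_mono {C D : Finset (Fin (n+1))} (h : D ⊆ C) (a b : G.V) :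
    G.rel D a b → G.rel C a b := by
  rintro ⟨e, he, hh⟩
  exact ⟨e, h he, hh⟩

/-- The connected component of `v` in the subgraph with colors in `C`. -/
noncomputable def comp (C : Finset (Fin (n+1))) (v : G.V) : Finset G.V :=
  Finset.univ.filter (fun w => Relation.ReflTransGen (G.rel C) v w)

lemma mem_comp {C : Finset (Fin (n+1))} {v w : G.V} :
    w ∈ G.comp C v ↔ Relation.ReflTransGen (G.rel C) v w := by
  simp [comp]

lemma isBubble_comp (C : Finset (Fin (n+1))) (v : G.V) : G.IsBubble C (G.comp C v) :=
  ⟨v, fun _ => G.mem_comp⟩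

lemma mem_comp_self (C : Finset (Fin (n+1))) (v : G.V) : v ∈ G.comp C v :=
  G.mem_comp.mpr .refl

lemma bubble_eq {C : Finset (Fin (n+1))} {S : Finset G.V} {v : G.V}
    (h : G.IsBubble C S) (hv : v ∈ S) : S = G.comp C v := by
  obtain ⟨u, hu⟩ := h
  have huv : Relation.ReflTransGen (G.rel C) u v := (hu v).mp hv
  ext w
  rw [hu w, G.mem_comp]
  exact ⟨fun h => (G.rtg_symm C huv).trans h, fun h => huv.trans h⟩

end ColoredGraph

namespace ColoredGraph

variable (G : ColoredGraph 3)

/-- A chosen vertex of a `2`-bubble. -/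
noncomputable def wit (F : G.Bubble 2) : G.V := F.2.2.choose

lemma wit_spec (F : G.Bubble 2) :
    ∀ w, w ∈ F.1.2 ↔ Relation.ReflTransGen (G.rel F.1.1) (G.wit F) w :=
  F.2.2.choose_spec

lemma wit_mem (F : G.Bubble 2) : G.wit F ∈ F.1.2 := (G.wit_spec F _).mpr .refl

noncomputable def vertexFiberEquiv (v : G.V) :
    {B : G.Bubble 3 // v ∈ B.1.2} ≃ {C : Finset (Fin 4) // C.card = 3} where
  toFun B := ⟨B.1.1.1, B.1.2.1⟩
  invFun C := ⟨⟨(C.1, G.comp C.1 v), C.2, G.isBubble_comp _ _⟩, G.mem_comp_self _ _⟩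
  left_inv := by
    rintro ⟨⟨⟨C, S⟩, hc, hS⟩, hv⟩
    have : S = G.comp C v := G.bubble_eq hS hv
    subst this; rfl
  right_inv C := rfl

noncomputable def edgeFiberEquiv (e : G.E) :
    {B : G.Bubble 3 // G.EdgeIn e B.1} ≃
      {C : Finset (Fin 4) // C.card = 3 ∧ G.color e ∈ C} where
  toFun B := ⟨B.1.1.1, B.1.2.1, B.2.1⟩
  invFun C := ⟨⟨(C.1, G.comp C.1 (G.ends e).1), C.2.1, G.isBubble_comp _ _⟩,
    C.2.2, G.mem_comp_self _ _,
    G.mem_comp.mpr (Relation.ReflTransGen.single ⟨e, C.2.2, Or.inl ⟨rfl, rfl⟩⟩)⟩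
  left_inv := by
    rintro ⟨⟨⟨C, S⟩, hc, hS⟩, hcol, h1, h2⟩
    have : S = G.comp C (G.ends e).1 := G.bubble_eq hS h1
    subst this; rfl
  right_inv C := rfl

noncomputable def faceFiberEquiv (F : G.Bubble 2) :
    {B : G.Bubble 3 // G.Contains B.1 F.1} ≃
      {C : Finset (Fin 4) // C.card = 3 ∧ F.1.1 ⊆ C} where
  toFun B := ⟨B.1.1.1, B.1.2.1, B.2.1⟩
  invFun C := ⟨⟨(C.1, G.comp C.1 (G.wit F)), C.2.1, G.isBubble_comp _ _⟩,
    C.2.2, fun w hw => G.mem_comp.mpr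
      (Relation.ReflTransGen.mono (G.rel_mono C.2.2) _ _ ((G.wit_spec F w).mp hw))⟩
  left_inv := by
    rintro ⟨⟨⟨C, S⟩, hc, hS⟩, hsub, hsubV⟩
    have : S = G.comp C (G.wit F) := G.bubble_eq hS (hsubV (G.wit_mem F))
    subst this; rfl
  right_inv C := rfl

lemma card_vertex_fiber (v : G.V) : Nat.card {B : G.Bubble 3 // v ∈ B.1.2} = 4 := by
  rw [Nat.card_eq_fintype_card, Fintype.card_congr (G.vertexFiberEquiv v),
    Fintype.card_subtype]
  decide

lemma card_edge_fiber (e : G.E) : Nat.card {B : G.Bubble 3 // G.EdgeIn e B.1} = 3 := by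
  rw [Nat.card_eq_fintype_card, Fintype.card_congr (G.edgeFiberEquiv e),
    Fintype.card_subtype]
  exact (show ∀ c : Fin 4,
    (Finset.univ.filter (fun C : Finset (Fin 4) => C.card = 3 ∧ c ∈ C)).card = 3
    by decide) (G.color e)

lemma card_face_fiber (F : G.Bubble 2) :
    Nat.card {B : G.Bubble 3 // G.Contains B.1 F.1} = 2 := by
  rw [Nat.card_eq_fintype_card, Fintype.card_congr (G.faceFiberEquiv F),
    Fintype.card_subtype]
  exact (show ∀ D : Finset (Fin 4), D.card = 2 →
    (Finset.univ.filter (fun C : Finset (Fin 4) => C.card = 3 ∧ D ⊆ C)).card = 2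
    by decide) F.1.1 F.2.1

lemma card_incident (v : G.V) :
    Nat.card {e : G.E // (G.ends e).1 = v ∨ (G.ends e).2 = v} = 4 := by
  have equiv : {e : G.E // (G.ends e).1 = v ∨ (G.ends e).2 = v} ≃ Fin 4 :=
    { toFun := fun e => G.color e.1
      invFun := fun i => ⟨(G.unique_edge v i).exists.choose,
        (G.unique_edge v i).exists.choose_spec.2⟩
      left_inv := fun e => Subtype.ext ((G.unique_edge v (G.color e.1)).unique
        (G.unique_edge v (G.color e.1)).exists.choose_spec ⟨rfl, e.2⟩)
      right_inv := fun i => (G.unique_edge v i).exists.choose_spec.1 }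
  rw [Nat.card_eq_fintype_card, Fintype.card_congr equiv, Fintype.card_fin]

lemma card_ends (e : G.E) :
    Nat.card {v : G.V // (G.ends e).1 = v ∨ (G.ends e).2 = v} = 2 := by
  rw [Nat.card_eq_fintype_card, Fintype.card_subtype]
  have h : Finset.univ.filter (fun v => (G.ends e).1 = v ∨ (G.ends e).2 = v)
      = {(G.ends e).1, (G.ends e).2} := by
    ext v
    simp [eq_comm]
  rw [h, Finset.card_insert_of_notMem (by simpa using G.no_loop e),
    Finset.card_singleton]

lemma natCard_helper {α : Type} [Fintype α] (p : α → Prop) [DecidablePred p] (k : ℕ)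
    (h : Nat.card {x // p x} = k) :
    (∑ x : α, if p x then 1 else 0) = k := by
  rw [← Finset.card_filter, ← Fintype.card_subtype, ← Nat.card_eq_fintype_card]
  exact h

lemma edge_count : 2 * Fintype.card G.E = 4 * Fintype.card G.V := by
  have h : ∑ v : G.V, ∑ e : G.E,
        (if (G.ends e).1 = v ∨ (G.ends e).2 = v then 1 else 0)
      = ∑ e : G.E, ∑ v : G.V,
        (if (G.ends e).1 = v ∨ (G.ends e).2 = v then 1 else 0) :=
    Finset.sum_comm
  have h1 : ∑ v : G.V, ∑ e : G.E,
      (if (G.ends e).1 = v ∨ (G.ends e).2 = v then 1 else 0)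
      = 4 * Fintype.card G.V := by
    have h2 : ∀ v : G.V, (∑ e : G.E,
        if (G.ends e).1 = v ∨ (G.ends e).2 = v then 1 else 0) = 4 :=
      fun v => natCard_helper _ 4 (G.card_incident v)
    simp only [h2]
    simp [mul_comm]
  have h2 : ∑ e : G.E, ∑ v : G.V,
      (if (G.ends e).1 = v ∨ (G.ends e).2 = v then 1 else 0)
      = 2 * Fintype.card G.E := by
    have h2 : ∀ e : G.E, (∑ v : G.V,
        if (G.ends e).1 = v ∨ (G.ends e).2 = v then 1 else 0) = 2 :=
      fun e => natCard_helper _ 2 (G.card_ends e)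
    simp only [h2]
    simp [mul_comm]
  rw [h1, h2] at h
  omega

lemma sum_nV : ∑ B : G.Bubble 3, G.nV B = 4 * Fintype.card G.V := by
  have h1 : ∑ B : G.Bubble 3, G.nV B
      = ∑ B : G.Bubble 3, ∑ v : G.V, if v ∈ B.1.2 then 1 else 0 := by
    refine Finset.sum_congr rfl fun B _ => ?_
    simp [nV, Finset.sum_ite_mem]
  rw [h1, Finset.sum_comm]
  have h2 : ∀ v : G.V, (∑ B : G.Bubble 3, if v ∈ B.1.2 then 1 else 0) = 4 :=
    fun v => natCard_helper _ 4 (G.card_vertex_fiber v)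
  simp only [h2]
  simp [mul_comm]

lemma sum_nE : ∑ B : G.Bubble 3, G.nE B = 3 * Fintype.card G.E := by
  have h1 : ∑ B : G.Bubble 3, G.nE B
      = ∑ B : G.Bubble 3, ∑ e : G.E, if G.EdgeIn e B.1 then 1 else 0 := by
    refine Finset.sum_congr rfl fun B _ => ?_
    exact (natCard_helper _ _ rfl).symm
  rw [h1, Finset.sum_comm]
  have h2 : ∀ e : G.E, (∑ B : G.Bubble 3, if G.EdgeIn e B.1 then 1 else 0) = 3 :=
    fun e => natCard_helper _ 3 (G.card_edge_fiber e)
  simp only [h2]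
  simp [mul_comm]

lemma sum_nF : ∑ B : G.Bubble 3, G.nF B = 2 * Nat.card (G.Bubble 2) := by
  have h1 : ∑ B : G.Bubble 3, G.nF B
      = ∑ B : G.Bubble 3, ∑ F : G.Bubble 2, if G.Contains B.1 F.1 then 1 else 0 := by
    refine Finset.sum_congr rfl fun B _ => ?_
    exact (natCard_helper _ _ rfl).symm
  rw [h1, Finset.sum_comm]
  have h2 : ∀ F : G.Bubble 2, (∑ B : G.Bubble 3, if G.Contains B.1 F.1 then 1 else 0) = 2 :=
    fun F => natCard_helper _ 2 (G.card_face_fiber F)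
  simp only [h2]
  simp [mul_comm, Nat.card_eq_fintype_card]

end ColoredGraph

open ColoredGraph in
/-- for a closed connected colored graph with 4 colors in which
every 3-bubble `𝔅` satisfies the Euler relation `n_𝔅 - l_𝔅 + f_𝔅 = 2 - 2g_𝔅`
for a nonnegative integer `g_𝔅` (its genus), one has
`N - L + F - B = -Σ_𝔅 g_𝔅`. -/
theorem euler_relation_sum (G : ColoredGraph 3) (hconn : G.Conn)
    (g : G.Bubble 3 → ℕ)
    (heuler : ∀ B : G.Bubble 3,
      (G.nV B : ℤ) - (G.nE B : ℤ) + (G.nF B : ℤ) = 2 - 2 * (g B : ℤ)) :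
    (Fintype.card G.V : ℤ) - (Fintype.card G.E : ℤ) + (Nat.card (G.Bubble 2) : ℤ)
        - (Nat.card (G.Bubble 3) : ℤ) = -(∑ B : G.Bubble 3, (g B : ℤ)) := by
  classical
  have e1 : ∑ B : G.Bubble 3, (G.nV B : ℤ) = ((4 * Fintype.card G.V : ℕ) : ℤ) := by
    rw [← Nat.cast_sum, G.sum_nV]
  have e2 : ∑ B : G.Bubble 3, (G.nE B : ℤ) = ((3 * Fintype.card G.E : ℕ) : ℤ) := by
    rw [← Nat.cast_sum, G.sum_nE]
  have e3 : ∑ B : G.Bubble 3, (G.nF B : ℤ)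
      = ((2 * Nat.card (G.Bubble 2) : ℕ) : ℤ) := by
    rw [← Nat.cast_sum, G.sum_nF]
  have hsum : (∑ B : G.Bubble 3, ((G.nV B : ℤ) - (G.nE B : ℤ) + (G.nF B : ℤ)))
      = ∑ B : G.Bubble 3, ((2 : ℤ) - 2 * (g B : ℤ)) :=
    Finset.sum_congr rfl (fun B _ => heuler B)
  rw [Finset.sum_add_distrib, Finset.sum_sub_distrib, e1, e2, e3] at hsum
  have hR : ∑ B : G.Bubble 3, ((2 : ℤ) - 2 * (g B : ℤ))
      = 2 * (Nat.card (G.Bubble 3) : ℤ) - 2 * ∑ B : G.Bubble 3, (g B : ℤ) := by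
    rw [Finset.sum_sub_distrib, ← Finset.mul_sum]
    simp [Finset.sum_const, Nat.card_eq_fintype_card, mul_comm]
  rw [hR] at hsum
  have hL : 2 * Fintype.card G.E = 4 * Fintype.card G.V := G.edge_count
  have hL' : (2 : ℤ) * (Fintype.card G.E : ℤ) = 4 * (Fintype.card G.V : ℤ) := by
    exact_mod_cast hL
  push_cast at hsum
  linarith
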